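/- If x* ∈ E is a global minimum of J, i.e. J(x*) = min_{u∈E} J(u), then m* = max_{y∈E} ( H_{x*,y} − J(y) ), where m* = max_{x,y∈E} ( H_{x,y} − max(J(x), J(y)) ). -/

import Mathlib

open scoped BigOperators

/-- A path from `x` to `y` for the neighbourhood relation `S` is a finite sequence
`f 0 = x, …, f n = y` with consecutive elements neighbours. -/
def IsPath {E : Type*} (S : E → E → Prop) (x y : E) (n : ℕ) (f : ℕ → E) : Prop :=
  f 0 = x ∧ f n = y ∧ ∀ i < n, S (f i) (f (i + 1))

/-- `elevation S J x y = H_{x,y}`, the minimum over paths `p` from `x` to `y` of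
`max_{z ∈ p} J z`. -/
noncomputable def elevation {E : Type*} (S : E → E → Prop) (J : E → ℝ) (x y : E) : ℝ :=
  sInf {h : ℝ | ∃ (n : ℕ) (f : ℕ → E), IsPath S x y n f ∧
    h = (Finset.range (n + 1)).sup' Finset.nonempty_range_add_one (fun i => J (f i))}

/-- `m* = max_{x,y} (H_{x,y} - max (J x) (J y))`. -/
noncomputable def mstar {E : Type*} [Fintype E] [Nonempty E]
    (S : E → E → Prop) (J : E → ℝ) : ℝ :=
  Finset.univ.sup' Finset.univ_nonempty fun x =>
    Finset.univ.sup' Finset.univ_nonempty fun y =>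
      elevation S J x y - max (J x) (J y)

/-! The elevation is an ultrametric: gluing a cheapest path from `x` to `x*` and one from `x*`
to `y` gives `H_{x,y} ≤ max (H_{x*,x}) (H_{x*,y})`, hence
`H_{x,y} - max (J x) (J y) ≤ max (H_{x*,x} - J x) (H_{x*,y} - J y)` for every `x*`.
Conversely, when `x*` minimises `J`, the pair `(x*, y)` contributes `H_{x*,y} - J y` to `m*`. -/

section Paths

variable {E : Type*} {S : E → E → Prop} {x y z : E} {n m : ℕ} {f g : ℕ → E}

namespace IsPath

theorem reverse (hsym : ∀ a b, S a b → S b a) (hf : IsPath S x y n f) :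
    IsPath S y x n (fun i => f (n - i)) := by
  obtain ⟨hf0, hfn, hstep⟩ := hf
  refine ⟨by simpa using hfn, by simpa using hf0, fun i hi => ?_⟩
  have hsucc : n - i = n - (i + 1) + 1 := by omega
  simpa only [hsucc] using hsym _ _ (hstep (n - (i + 1)) (by omega))

theorem append (hf : IsPath S x y n f) (hg : IsPath S y z m g) :
    IsPath S x z (n + m) (fun i => if i ≤ n then f i else g (i - n)) := by
  obtain ⟨hf0, hfn, hfstep⟩ := hf
  obtain ⟨hg0, hgm, hgstep⟩ := hg
  refine ⟨by simpa using hf0, ?_, fun i hi => ?_⟩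
  · rcases Nat.eq_zero_or_pos m with rfl | hm
    · simpa [hfn] using hg0.symm.trans hgm
    · simpa [show ¬n + m ≤ n by omega] using hgm
  · by_cases hin : i < n
    · simpa [hin.le, show i + 1 ≤ n by omega] using hfstep i hin
    · have hstep := hgstep (i - n) (by omega)
      rcases eq_or_lt_of_le (not_lt.mp hin) with rfl | hlt
      · simpa [hfn, ← hg0, Nat.add_sub_cancel_left] using hstep
      · simpa [hlt.not_ge, show ¬i + 1 ≤ n by omega, show i + 1 - n = i - n + 1 by omega]
          using hstep

end IsPath

section PathMax

variable (J : E → ℝ)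

def pathMax (n : ℕ) (f : ℕ → E) : ℝ :=
  (Finset.range (n + 1)).sup' Finset.nonempty_range_add_one (fun i => J (f i))

theorem pathMax_mem_range (n : ℕ) (f : ℕ → E) : pathMax J n f ∈ Set.range J := by
  obtain ⟨i, -, hi⟩ :=
    Finset.exists_mem_eq_sup' Finset.nonempty_range_add_one (fun i => J (f i))
  exact ⟨f i, hi.symm⟩

theorem pathMax_reverse (n : ℕ) (f : ℕ → E) :
    pathMax J n (fun i => f (n - i)) = pathMax J n f := by
  apply le_antisymm <;> refine Finset.sup'_le _ _ fun i hi => ?_ <;>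
    have hmem : n - i ∈ Finset.range (n + 1) := by simp
  · exact Finset.le_sup' (fun j => J (f j)) hmem
  · exact Finset.le_sup'_of_le (fun j => J (f (n - j))) hmem <| by
      simp only [Finset.mem_range] at hi
      rw [Nat.sub_sub_self (by omega)]

theorem pathMax_append_le (n m : ℕ) (f g : ℕ → E) :
    pathMax J (n + m) (fun i => if i ≤ n then f i else g (i - n)) ≤
      max (pathMax J n f) (pathMax J m g) := by
  refine Finset.sup'_le _ _ fun i hi => ?_
  simp only [Finset.mem_range] at hi
  dsimp only
  split_ifs with hin
  · exact le_max_of_le_left (Finset.le_sup' (fun j => J (f j)) (by simp; omega))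
  · exact le_max_of_le_right (Finset.le_sup' (fun j => J (g j)) (by simp; omega))

end PathMax

section Elevation

variable (S) (J : E → ℝ)

def pathMaxes (x y : E) : Set ℝ :=
  {h | ∃ (n : ℕ) (f : ℕ → E), IsPath S x y n f ∧ h = pathMax J n f}

theorem elevation_eq_sInf_pathMaxes (x y : E) : elevation S J x y = sInf (pathMaxes S J x y) :=
  rfl

theorem pathMaxes_subset_range (x y : E) : pathMaxes S J x y ⊆ Set.range J := by
  rintro h ⟨n, f, -, rfl⟩
  exact pathMax_mem_range J n f

variable {S}

theorem pathMaxes_comm (hsym : ∀ a b, S a b → S b a) (x y : E) :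
    pathMaxes S J x y = pathMaxes S J y x := by
  have hsub : ∀ x y, pathMaxes S J x y ⊆ pathMaxes S J y x := by
    rintro x y h ⟨n, f, hf, rfl⟩
    exact ⟨n, _, hf.reverse hsym, (pathMax_reverse J n f).symm⟩
  exact (hsub x y).antisymm (hsub y x)

theorem elevation_comm (hsym : ∀ a b, S a b → S b a) (x y : E) :
    elevation S J x y = elevation S J y x := by
  simp only [elevation_eq_sInf_pathMaxes, pathMaxes_comm J hsym x y]

variable [Finite E]

theorem elevation_le_pathMax (hf : IsPath S x y n f) : elevation S J x y ≤ pathMax J n f :=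
  csInf_le ((Set.finite_range J).subset (pathMaxes_subset_range S J x y)).bddBelow
    ⟨n, f, hf, rfl⟩

/-- Path maxima are values of `J`, so there are finitely many of them and the infimum is
attained. -/
theorem exists_isPath_pathMax_eq_elevation (hxy : ∃ n f, IsPath S x y n f) :
    ∃ n f, IsPath S x y n f ∧ pathMax J n f = elevation S J x y := by
  obtain ⟨n, f, hf⟩ := hxy
  obtain ⟨n, f, hf, heq⟩ :=
    Set.Nonempty.csInf_mem (s := pathMaxes S J x y) ⟨_, n, f, hf, rfl⟩
      ((Set.finite_range J).subset (pathMaxes_subset_range S J x y))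
  exact ⟨n, f, hf, heq.symm⟩

theorem elevation_le_max (hxy : ∃ n f, IsPath S x y n f) (hyz : ∃ n f, IsPath S y z n f) :
    elevation S J x z ≤ max (elevation S J x y) (elevation S J y z) := by
  obtain ⟨n, f, hf, hfx⟩ := exists_isPath_pathMax_eq_elevation J hxy
  obtain ⟨m, g, hg, hgy⟩ := exists_isPath_pathMax_eq_elevation J hyz
  rw [← hfx, ← hgy]
  exact (elevation_le_pathMax J (hf.append hg)).trans (pathMax_append_le J n m f g)

theorem elevation_sub_max_le (hsym : ∀ a b, S a b → S b a)
    (hconn : ∀ a b : E, ∃ (n : ℕ) (f : ℕ → E), IsPath S a b n f) (x y z : E) :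
    elevation S J x y - max (J x) (J y) ≤
      max (elevation S J z x - J x) (elevation S J z y - J y) :=
  calc elevation S J x y - max (J x) (J y)
      ≤ max (elevation S J z x) (elevation S J z y) - max (J x) (J y) := by
        rw [elevation_comm J hsym z x]
        exact sub_le_sub_right (elevation_le_max J (hconn x z) (hconn z y)) _
    _ ≤ max (elevation S J z x - J x) (elevation S J z y - J y) := max_sub_max_le_max _ _ _ _

end Elevation

end Paths

/-- If `x*` is a global minimum of `J`, then `m* = max_{y} (H_{x*,y} - J y)`. -/
theorem mstar_eq_sup_from_min
    {E : Type*} [Fintype E] [Nonempty E] (S : E → E → Prop)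
    (hsym : ∀ a b, S a b → S b a)
    (hconn : ∀ a b : E, ∃ (n : ℕ) (f : ℕ → E), IsPath S a b n f)
    (J : E → ℝ) (xstar : E)
    (hxstar : J xstar = Finset.univ.inf' Finset.univ_nonempty J) :
    mstar S J =
      Finset.univ.sup' Finset.univ_nonempty (fun y => elevation S J xstar y - J y) := by
  set M := Finset.univ.sup' Finset.univ_nonempty (fun y => elevation S J xstar y - J y)
  have hle_M : ∀ y, elevation S J xstar y - J y ≤ M := fun y =>
    Finset.le_sup' (fun y => elevation S J xstar y - J y) (Finset.mem_univ y)
  refine le_antisymm ?_ (Finset.sup'_le _ _ fun y _ => ?_)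
  · refine Finset.sup'_le _ _ fun x _ => Finset.sup'_le _ _ fun y _ => ?_
    exact (elevation_sub_max_le J hsym hconn x y xstar).trans (max_le (hle_M x) (hle_M y))
  · have hmax : max (J xstar) (J y) = J y :=
      max_eq_right (hxstar ▸ Finset.inf'_le J (Finset.mem_univ y))
    refine Finset.le_sup'_of_le _ (Finset.mem_univ xstar) ?_
    exact Finset.le_sup'_of_le _ (Finset.mem_univ y) (by rw [hmax])
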